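/- Let ℓ be an odd prime and r ≥ 1 an integer. For each prime q ≠ ℓ let g_q be the multiplicative order of q^r modulo ℓ, and set μ_q = ℓ if g_q = 1 and μ_q = g_q otherwise. Then for every real s > 1, ∑_{n ≥ 1, ℓ ∤ σ_r(n)} n^{−s} = (1 − ℓ^{−s})^{−1} · ∏_{q prime, q ≠ ℓ} (1 − q^{−(μ_q−1)s}) / ((1 − q^{−s})·(1 − q^{−μ_q s})), the series and the infinite product over primes q ≠ ℓ both converging. -/

import Mathlib

/-!
The function `f n = [ℓ ∤ σ_r(n)] n^{-s}` is multiplicative, because `σ_r` is, so `∑ f` has an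
Euler product whose factor at `p` is `∑_e f(p^e)`. Modulo `ℓ`, `σ_r(p^e) = 1 + t + ⋯ + t^e` with
`t = p^r`. For `p = ℓ` we have `t = 0`, so `ℓ` never divides `σ_r(ℓ^e)` and the factor is the full
geometric series `(1 - ℓ^{-s})⁻¹`. For `q ≠ ℓ` the sum vanishes exactly when `μ_q ∣ e + 1` (for
`t = 1` it equals `e + 1`, otherwise it is `(t^{e+1} - 1)/(t - 1)`), and the geometric series with
those terms removed is `(1 - x^{μ-1}) / ((1 - x)(1 - x^μ))`, `x = q^{-s}`. Convergence of the
product over `q ≠ ℓ` alone comes from the Euler product of `f` with the multiples of `ℓ` removed,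
whose factor at `ℓ` is `1`.
-/

/-- `mySigma m n = ∑_{d ∣ n} d^m`, the sum of `m`-th powers of the divisors of `n`. -/
def mySigma (m n : ℕ) : ℕ := ∑ d ∈ n.divisors, d ^ m

/-- `mu ℓ r q` equals `ℓ` if the multiplicative order of `q^r` modulo `ℓ` is `1`,
and equals that multiplicative order otherwise. -/
noncomputable def mu (ℓ r q : ℕ) : ℕ :=
  if orderOf ((q : ZMod ℓ) ^ r) = 1 then ℓ else orderOf ((q : ZMod ℓ) ^ r)

open ArithmeticFunction
open scoped ArithmeticFunction.sigma

section Geometric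

variable {K : Type*} [NormedField K] {x : K}

theorem norm_pow_lt_one (hx : ‖x‖ < 1) {n : ℕ} (hn : n ≠ 0) : ‖x ^ n‖ < 1 := by
  rw [norm_pow]
  exact pow_lt_one₀ (norm_nonneg _) hx hn

theorem tsum_geometric_dvd_succ (hx : ‖x‖ < 1) (ν : ℕ) :
    ∑' e : ℕ, (if ν + 1 ∣ e + 1 then x ^ e else 0) = x ^ ν / (1 - x ^ (ν + 1)) := by
  have hinj : Function.Injective (fun k : ℕ => (ν + 1) * k + ν) := fun a b h => by
    simpa using h
  have hsupp : Function.support (fun e : ℕ => if ν + 1 ∣ e + 1 then x ^ e else 0) ⊆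
      Set.range (fun k : ℕ => (ν + 1) * k + ν) := by
    intro e he
    obtain ⟨_ | m, hm⟩ : ν + 1 ∣ e + 1 := by by_contra h; simp [h] at he
    · omega
    · exact ⟨m, by linarith [show (ν + 1) * (m + 1) = (ν + 1) * m + ν + 1 by ring]⟩
  have hterm (k : ℕ) : (if ν + 1 ∣ (ν + 1) * k + ν + 1 then x ^ ((ν + 1) * k + ν) else 0) =
      (x ^ (ν + 1)) ^ k * x ^ ν := by
    rw [if_pos ⟨k + 1, by ring⟩, pow_add, pow_mul]
  rw [← hinj.tsum_eq hsupp]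
  simp only [hterm, tsum_mul_right, div_eq_inv_mul,
    tsum_geometric_of_norm_lt_one (norm_pow_lt_one hx ν.succ_ne_zero)]

theorem tsum_geometric_not_dvd_succ [CompleteSpace K] (hx : ‖x‖ < 1) {μ : ℕ} (hμ : 0 < μ) :
    ∑' e : ℕ, (if μ ∣ e + 1 then 0 else x ^ e) =
      (1 - x ^ (μ - 1)) / ((1 - x) * (1 - x ^ μ)) := by
  obtain ⟨ν, rfl⟩ : ∃ ν, μ = ν + 1 := ⟨μ - 1, by omega⟩
  have hgeom := summable_geometric_of_norm_lt_one hx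
  have hdvd : Summable fun e : ℕ => if ν + 1 ∣ e + 1 then x ^ e else 0 :=
    (hgeom.indicator {e | ν + 1 ∣ e + 1}).congr fun e => by simp [Set.indicator_apply]
  have hsplit (e : ℕ) : (if ν + 1 ∣ e + 1 then 0 else x ^ e) =
      x ^ e - if ν + 1 ∣ e + 1 then x ^ e else 0 := by
    split_ifs <;> simp
  have one_sub_ne_zero {y : K} (hy : ‖y‖ < 1) : 1 - y ≠ 0 :=
    sub_ne_zero.mpr fun h => by simp [← h] at hy
  have h₁ := one_sub_ne_zero hx
  have h₂ := one_sub_ne_zero (norm_pow_lt_one hx ν.succ_ne_zero)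
  rw [tsum_congr hsplit, hgeom.tsum_sub hdvd, tsum_geometric_of_norm_lt_one hx,
    tsum_geometric_dvd_succ hx, Nat.add_sub_cancel]
  field_simp
  ring

end Geometric

theorem geom_sum_eq_zero_iff_orderOf_dvd {K : Type*} [Field K] {t : K} (ht : t ≠ 1) (n : ℕ) :
    ∑ i ∈ Finset.range n, t ^ i = 0 ↔ orderOf t ∣ n := by
  rw [geom_sum_eq ht, div_eq_zero_iff, or_iff_left (sub_ne_zero.mpr ht), sub_eq_zero,
    orderOf_dvd_iff_pow_eq_one]

theorem mySigma_eq_sigma (m n : ℕ) : mySigma m n = σ m n := by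
  rw [mySigma, sigma_apply]

theorem natCast_sigma_prime_pow {R : Type*} [CommSemiring R] {p : ℕ} (hp : p.Prime) (r e : ℕ) :
    ((σ r (p ^ e) : ℕ) : R) = ∑ i ∈ Finset.range (e + 1), ((p : R) ^ r) ^ i := by
  simp [sigma_apply_prime_pow hp, ← pow_mul, mul_comm]

theorem dvd_mySigma_prime_pow_iff {ℓ p : ℕ} (hℓ : ℓ.Prime) (hp : p.Prime) (r e : ℕ) :
    ℓ ∣ mySigma r (p ^ e) ↔ mu ℓ r p ∣ e + 1 := by
  have : Fact ℓ.Prime := ⟨hℓ⟩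
  rw [← ZMod.natCast_eq_zero_iff, mySigma_eq_sigma, natCast_sigma_prime_pow hp, mu]
  split_ifs with h <;> rw [orderOf_eq_one_iff] at h
  · rw [h]
    simpa using ZMod.natCast_eq_zero_iff (e + 1) ℓ
  · exact geom_sum_eq_zero_iff_orderOf_dvd h _

-- `orderOf 0 = 0`, so with `p = ℓ` the condition `mu ℓ r p ∣ e + 1` above never holds.
theorem mu_self {ℓ r : ℕ} (hℓ : ℓ.Prime) (hr : r ≠ 0) : mu ℓ r ℓ = 0 := by
  have : Fact ℓ.Prime := ⟨hℓ⟩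
  simp [mu, zero_pow hr, orderOf_zero]

theorem mu_pos {ℓ q : ℕ} (hℓ : ℓ.Prime) (hq : ¬ ℓ ∣ q) (r : ℕ) : 0 < mu ℓ r q := by
  have : Fact ℓ.Prime := ⟨hℓ⟩
  have ht : (q : ZMod ℓ) ^ r ≠ 0 := pow_ne_zero _ (by rwa [Ne, ZMod.natCast_eq_zero_iff])
  rw [mu]
  split_ifs
  · exact hℓ.pos
  · exact orderOf_pos_iff.mpr (isOfFinOrder_iff_pow_eq_one.mpr
      ⟨ℓ - 1, Nat.sub_pos_of_lt hℓ.one_lt, ZMod.pow_card_sub_one_eq_one ht⟩)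

namespace EulerProduct

variable {R : Type*} [NormedCommRing R] [CompleteSpace R] {f : ℕ → R}
  (hf₁ : f 1 = 1) (hmul : ∀ {m n}, Nat.Coprime m n → f (m * n) = f m * f n)
  (hsum : Summable (‖f ·‖))
include hf₁ hmul hsum

theorem hasProd_prime_ne {p : ℕ} (hp : p.Prime) :
    HasProd (fun q : {q : ℕ // q.Prime ∧ q ≠ p} => ∑' e, f ((q : ℕ) ^ e))
      (∑' n, if p ∣ n then 0 else f n) := by
  set g : ℕ → R := fun n => if p ∣ n then 0 else f n
  have hg₁ : g 1 = 1 := by simp [g, hp.ne_one, hf₁]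
  have hgmul {m n : ℕ} (hmn : m.Coprime n) : g (m * n) = g m * g n := by
    simp only [g, hp.dvd_mul, hmul hmn]
    split_ifs <;> simp_all
  have hgsum : Summable (‖g ·‖) :=
    hsum.of_nonneg_of_le (fun _ => norm_nonneg _) fun n => by
      simp only [g]; split_ifs <;> simp
  have hg : HasProd ({q | q.Prime}.mulIndicator fun q => ∑' e, g (q ^ e)) (∑' n, g n) :=
    eulerProduct_hasProd_mulIndicator hg₁ hgmul hgsum (by simp [g])
  refine (hasProd_subtype_iff_mulIndicator (s := {q | q.Prime ∧ q ≠ p})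
    (f := fun q => ∑' e, f (q ^ e))).mpr (hg.congr_fun fun q => ?_)
  simp only [Set.mulIndicator_apply, Set.mem_ofPred_eq]
  by_cases hq : q.Prime
  · by_cases hqp : q = p
    · subst hqp
      rw [if_neg (by simp), if_pos hq,
        tsum_eq_single 0 fun e he => if_pos (dvd_pow_self q he), pow_zero]
      exact hg₁.symm
    · have hndvd (e : ℕ) : ¬ p ∣ q ^ e := fun h =>
        hqp ((Nat.prime_dvd_prime_iff_eq hp hq).mp (hp.dvd_of_dvd_pow h)).symm
      simp [hq, hqp, g, hndvd]
  · simp [hq]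

theorem tsum_eq_tsum_prime_pow_mul (hf₀ : f 0 = 0) {p : ℕ} (hp : p.Prime) :
    ∑' n, f n = (∑' e, f (p ^ e)) * ∑' n, if p ∣ n then 0 else f n := by
  set F : ℕ → R := {q | q.Prime}.mulIndicator fun q => ∑' e, f (q ^ e)
  have hcompl : HasProd (F ∘ (↑) : (({p}ᶜ : Set ℕ)) → R) (∑' n, if p ∣ n then 0 else f n) := by
    have hset : ({p}ᶜ ∩ {q | q.Prime} : Set ℕ) = {q | q.Prime ∧ q ≠ p} := by
      ext q; simp [and_comm]
    rw [hasProd_subtype_iff_mulIndicator, Set.mulIndicator_mulIndicator, hset]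
    exact hasProd_subtype_iff_mulIndicator.mp (hasProd_prime_ne hf₁ hmul hsum hp)
  have := (hasProd_singleton p F).mul_compl hcompl
  rw [(eulerProduct_hasProd_mulIndicator hf₁ hmul hsum hf₀).unique this]
  simp [F, hp]

end EulerProduct

def notDvdSigma (ℓ r : ℕ) : Set ℕ := {n | 0 < n ∧ ¬ ℓ ∣ mySigma r n}

section NotDvdSigma

variable {ℓ : ℕ} (hℓ : ℓ.Prime) (r : ℕ)
include hℓ

theorem one_mem_notDvdSigma : 1 ∈ notDvdSigma ℓ r := by
  simp [notDvdSigma, mySigma, hℓ.ne_one]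

theorem mul_mem_notDvdSigma_iff {m n : ℕ} (hmn : m.Coprime n) :
    m * n ∈ notDvdSigma ℓ r ↔ m ∈ notDvdSigma ℓ r ∧ n ∈ notDvdSigma ℓ r := by
  simp only [notDvdSigma, Set.mem_ofPred_eq, mySigma_eq_sigma,
    isMultiplicative_sigma.map_mul_of_coprime hmn, hℓ.dvd_mul, CanonicallyOrderedAdd.mul_pos]
  tauto

theorem pow_mem_notDvdSigma_iff {p : ℕ} (hp : p.Prime) (e : ℕ) :
    p ^ e ∈ notDvdSigma ℓ r ↔ ¬ mu ℓ r p ∣ e + 1 := by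
  simp [notDvdSigma, pow_pos hp.pos, dvd_mySigma_prime_pow_iff hℓ hp]

theorem indicator_notDvdSigma_mul {m n : ℕ} (hmn : m.Coprime n) (s : ℝ) :
    (notDvdSigma ℓ r).indicator (fun n : ℕ => (n : ℝ) ^ (-s)) (m * n) =
      (notDvdSigma ℓ r).indicator (fun n : ℕ => (n : ℝ) ^ (-s)) m *
        (notDvdSigma ℓ r).indicator (fun n : ℕ => (n : ℝ) ^ (-s)) n := by
  classical
  simp only [Set.indicator_apply, mul_mem_notDvdSigma_iff hℓ r hmn]
  split_ifs <;> simp_all [Real.mul_rpow]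

theorem tsum_indicator_notDvdSigma_prime_pow {p : ℕ} (hp : p.Prime) (s : ℝ) :
    ∑' e, (notDvdSigma ℓ r).indicator (fun n : ℕ => (n : ℝ) ^ (-s)) (p ^ e) =
      ∑' e, if mu ℓ r p ∣ e + 1 then 0 else ((p : ℝ) ^ (-s)) ^ e := by
  classical
  refine tsum_congr fun e => ?_
  simp only [Set.indicator_apply, pow_mem_notDvdSigma_iff hℓ r hp]
  split_ifs
  · rfl
  · push_cast
    exact (Real.rpow_pow_comm (Nat.cast_nonneg p) _ e).symm

end NotDvdSigma

theorem norm_natCast_rpow_neg_lt_one {p : ℕ} (hp : 1 < p) {s : ℝ} (hs : 0 < s) :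
    ‖(p : ℝ) ^ (-s)‖ < 1 := by
  rw [Real.norm_of_nonneg (by positivity)]
  exact Real.rpow_lt_one_of_one_lt_of_neg (by exact_mod_cast hp) (by linarith)

theorem stmt10_general (ℓ : ℕ) (hℓ : ℓ.Prime) (r : ℕ) (hr : 1 ≤ r)
    (s : ℝ) (hs : 1 < s) :
    Summable (fun n : {n : ℕ // 0 < n ∧ ¬ ℓ ∣ mySigma r n} => ((n : ℕ) : ℝ) ^ (-s)) ∧
    Multipliable (fun q : {q : ℕ // q.Prime ∧ q ≠ ℓ} =>
      (1 - ((q : ℕ) : ℝ) ^ (-(((mu ℓ r q : ℝ)) - 1) * s)) /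
        ((1 - ((q : ℕ) : ℝ) ^ (-s)) * (1 - ((q : ℕ) : ℝ) ^ (-(mu ℓ r q : ℝ) * s)))) ∧
    (∑' n : {n : ℕ // 0 < n ∧ ¬ ℓ ∣ mySigma r n}, ((n : ℕ) : ℝ) ^ (-s)) =
      (1 - (ℓ : ℝ) ^ (-s))⁻¹ *
        ∏' q : {q : ℕ // q.Prime ∧ q ≠ ℓ},
          (1 - ((q : ℕ) : ℝ) ^ (-(((mu ℓ r q : ℝ)) - 1) * s)) /
            ((1 - ((q : ℕ) : ℝ) ^ (-s)) * (1 - ((q : ℕ) : ℝ) ^ (-(mu ℓ r q : ℝ) * s))) := by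
  set f := (notDvdSigma ℓ r).indicator fun n : ℕ => (n : ℝ) ^ (-s)
  have hf₀ : f 0 = 0 := by simp [f, notDvdSigma]
  have hf₁ : f 1 = 1 := by simp [f, one_mem_notDvdSigma hℓ]
  have hmul {m n : ℕ} (hmn : m.Coprime n) := indicator_notDvdSigma_mul hℓ r hmn s
  have hsum : Summable (‖f ·‖) := by
    refine (Real.summable_nat_rpow.mpr (by linarith : -s < -1)).of_nonneg_of_le
      (fun _ => norm_nonneg _) fun n => ?_
    rw [Real.norm_of_nonneg (Set.indicator_nonneg (fun _ _ => by positivity) _)]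
    exact Set.indicator_le_self' (fun _ _ => by positivity) n
  have hx {p : ℕ} (hp : p.Prime) := norm_natCast_rpow_neg_lt_one hp.one_lt (by linarith : 0 < s)
  have hpow (p k : ℕ) : ((p : ℝ) ^ (-s)) ^ k = (p : ℝ) ^ (-(k : ℝ) * s) := by
    rw [← Real.rpow_mul_natCast (Nat.cast_nonneg p), neg_mul, neg_mul, mul_comm]
  have hprod := (EulerProduct.hasProd_prime_ne hf₁ hmul hsum hℓ).congr_fun fun q => by
    have hμ := mu_pos hℓ (fun h => q.2.2 ((Nat.prime_dvd_prime_iff_eq hℓ q.2.1).mp h).symm) r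
    rw [tsum_indicator_notDvdSigma_prime_pow hℓ r q.2.1, tsum_geometric_not_dvd_succ (hx q.2.1) hμ,
      hpow, hpow, Nat.cast_sub hμ, Nat.cast_one]
  refine ⟨summable_subtype_iff_indicator.mpr hsum.of_norm, hprod.multipliable, ?_⟩
  refine (tsum_subtype (notDvdSigma ℓ r) fun n : ℕ => (n : ℝ) ^ (-s)).trans ?_
  rw [EulerProduct.tsum_eq_tsum_prime_pow_mul hf₁ hmul hsum hf₀ hℓ, hprod.tprod_eq,
    tsum_indicator_notDvdSigma_prime_pow hℓ r hℓ, mu_self hℓ (by omega : r ≠ 0)]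
  simp [tsum_geometric_of_norm_lt_one (hx hℓ)]

theorem stmt10 (ℓ : ℕ) (hℓ : ℓ.Prime) (hodd : Odd ℓ) (r : ℕ) (hr : 1 ≤ r)
    (s : ℝ) (hs : 1 < s) :
    Summable (fun n : {n : ℕ // 0 < n ∧ ¬ ℓ ∣ mySigma r n} => ((n : ℕ) : ℝ) ^ (-s)) ∧
    Multipliable (fun q : {q : ℕ // q.Prime ∧ q ≠ ℓ} =>
      (1 - ((q : ℕ) : ℝ) ^ (-(((mu ℓ r q : ℝ)) - 1) * s)) /
        ((1 - ((q : ℕ) : ℝ) ^ (-s)) * (1 - ((q : ℕ) : ℝ) ^ (-(mu ℓ r q : ℝ) * s)))) ∧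
    (∑' n : {n : ℕ // 0 < n ∧ ¬ ℓ ∣ mySigma r n}, ((n : ℕ) : ℝ) ^ (-s)) =
      (1 - (ℓ : ℝ) ^ (-s))⁻¹ *
        ∏' q : {q : ℕ // q.Prime ∧ q ≠ ℓ},
          (1 - ((q : ℕ) : ℝ) ^ (-(((mu ℓ r q : ℝ)) - 1) * s)) /
            ((1 - ((q : ℕ) : ℝ) ^ (-s)) * (1 - ((q : ℕ) : ℝ) ^ (-(mu ℓ r q : ℝ) * s))) :=
  stmt10_general ℓ hℓ r hr s hs
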